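/- For every ν > 0 and every bounded set B ⊆ ℝⁿ there exists T = T(ν, B) > 0 such that for every t₀ ≥ 0 and every solution x : [t₀, ∞) → ℝⁿ of the masked average-consensus system with x(t₀) = x₀ ∈ B, one has ‖x(t) − (𝟙ᵀx₀/n)·𝟙‖ < ν for all t > t₀ + T. That is, the average-consensus point is attractive uniformly in the initial time t₀ and uniformly over initial conditions in bounded sets. -/

import Mathlib

/-!
Since `𝟙ᵀL = 0` the average `η` of the state is conserved, so the disagreement `e = x - η𝟙`
stays in `𝟙ᗮ`, where `L + Lᵀ` is coercive: `eᵀ(L + Lᵀ)e ≥ λ|e|²`. Splitting the mask off as a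
perturbation of size `O(e^{-μ(t - t₀)}(|e| + 1))`, the energy `V = |e|²` satisfies
`V' ≤ -λV + e^{-μ(t - t₀)}(aV + b)`. By Grönwall, `V` grows at most exponentially during a fixed
time `T₁`; afterwards the perturbation is dominated, and `V` decays at rate `λ/2` to a level
`O(e^{-μT₁})`. All constants depend on `x₀` only through a bound on `‖x₀‖`, which gives the
uniformity in `t₀` and over bounded sets.
-/

open Set Filter Topology Matrix

/-- Right-hand side of the masked average-consensus system
`ẋ = -L (I + Φ e^{-Σ t}) (x + e^{-Δ t} γ)`, written componentwise through the
diagonal matrices `Φ = diag φ`, `Σ = diag σ`, `Δ = diag δ`. -/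
noncomputable def maskedConsensusRHS {n : ℕ} (L : Matrix (Fin n) (Fin n) ℝ)
    (φ σ δ γ : Fin n → ℝ) (t : ℝ) (x : Fin n → ℝ) : Fin n → ℝ :=
  -(L.mulVec (fun i => (1 + φ i * Real.exp (-σ i * t)) * (x i + Real.exp (-δ i * t) * γ i)))

open Real Finset

lemma exists_pos_le_of_forall_pos {ι : Type*} [Finite ι] {f : ι → ℝ} (hf : ∀ i, 0 < f i) :
    ∃ μ > 0, ∀ i, μ ≤ f i := by
  cases isEmpty_or_nonempty ι
  · exact ⟨1, one_pos, isEmptyElim⟩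
  · obtain ⟨i, hi⟩ := Finite.exists_min f
    exact ⟨f i, hf i, hi⟩

lemma le_gronwallBound_of_hasDerivAt {f f' : ℝ → ℝ} {δ K ε a b : ℝ} (hab : a ≤ b)
    (hf : ∀ x ∈ Icc a b, HasDerivAt f (f' x) x) (ha : f a ≤ δ)
    (bound : ∀ x ∈ Icc a b, f' x ≤ K * f x + ε) :
    f b ≤ gronwallBound δ K ε (b - a) :=
  le_gronwallBound_of_liminf_deriv_right_le
    (fun x hx => (hf x hx).continuousAt.continuousWithinAt)
    (fun x hx _ hr => (hf x (Ico_subset_Icc_self hx)).hasDerivWithinAt.liminf_right_slope_le hr)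
    ha (fun x hx => bound x (Ico_subset_Icc_self hx)) b (right_mem_Icc.2 hab)

lemma gronwallBound_le_of_neg {δ K ε x : ℝ} (hK : K < 0) (hε : 0 ≤ ε) (hx : 0 ≤ x) :
    gronwallBound δ K ε x ≤ δ * exp (K * x) + ε / -K := by
  have hexp : 0 ≤ 1 - exp (K * x) :=
    sub_nonneg.2 (exp_le_one_iff.2 (mul_nonpos_of_nonpos_of_nonneg hK.le hx))
  have hεK : 0 ≤ ε / -K := div_nonneg hε (neg_nonneg.2 hK.le)
  rw [gronwallBound_of_K_ne_0 hK.ne]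
  have : ε / K * (exp (K * x) - 1) = ε / -K * (1 - exp (K * x)) := by
    rw [div_neg, neg_mul_comm, neg_sub]
  simp only [this, add_le_add_iff_left]
  nlinarith [exp_pos (K * x)]

lemma eventually_mul_exp_neg_mul_lt {μ : ℝ} (hμ : 0 < μ) (c : ℝ) {r : ℝ} (hr : 0 < r) :
    ∀ᶠ T in atTop, c * exp (-μ * T) < r := by
  have : Tendsto (fun T => c * exp (-μ * T)) atTop (𝓝 0) := by
    simpa using (tendsto_exp_neg_atTop_nhds_zero.comp
      (tendsto_id.const_mul_atTop hμ)).const_mul c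
  exact this.eventually_lt_const hr

theorem exists_uniform_decay_time {lam μ a b V₀ ε : ℝ} (hlam : 0 < lam) (hμ : 0 < μ)
    (ha : 0 ≤ a) (hb : 0 ≤ b) (hε : 0 < ε) :
    ∃ T > 0, ∀ (V V' : ℝ → ℝ) (t₀ : ℝ), (∀ s ≥ t₀, HasDerivAt V (V' s) s) →
      (∀ s ≥ t₀, 0 ≤ V s) → V t₀ ≤ V₀ →
      (∀ s ≥ t₀, V' s ≤ -lam * V s + exp (-μ * (s - t₀)) * (a * V s + b)) →
      ∀ t ≥ t₀ + T, V t ≤ ε := by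
  -- After `T₁` the perturbation costs at most `λ/2` of the decay rate and leaves a residual level
  -- `2b e^{-μT₁}/λ ≤ ε/2`; `T₂` is the time to bring the Grönwall bound `V₁` below `ε/2`.
  obtain ⟨T₁, ⟨haT₁, hbT₁⟩, hT₁⟩ := (((eventually_mul_exp_neg_mul_lt hμ a (half_pos hlam)).and
    (eventually_mul_exp_neg_mul_lt hμ b (show 0 < lam * ε / 4 by positivity))).and
    (eventually_ge_atTop 0)).exists
  set V₁ := gronwallBound V₀ a b T₁
  obtain ⟨T₂, hV₁T₂, hT₂⟩ := ((eventually_mul_exp_neg_mul_lt (half_pos hlam) V₁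
    (half_pos hε)).and (eventually_gt_atTop 0)).exists
  refine ⟨T₁ + T₂, by positivity, fun V V' t₀ hV hV0 hVt₀ hV' t ht => ?_⟩
  set q₁ := exp (-μ * T₁)
  have hgrowth : V (t₀ + T₁) ≤ V₁ := by
    refine (le_gronwallBound_of_hasDerivAt (le_add_of_nonneg_right hT₁)
      (fun s hs => hV s hs.1) hVt₀ fun s hs => ?_).trans_eq (by rw [add_sub_cancel_left])
    have hq : exp (-μ * (s - t₀)) ≤ 1 := exp_le_one_iff.2 (by nlinarith [hs.1])
    have hVs := hV0 s hs.1
    nlinarith [hV' s hs.1, mul_le_mul_of_nonneg_right hq (by positivity : 0 ≤ a * V s + b)]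
  have hdecay : ∀ s ∈ Icc (t₀ + T₁) t, V' s ≤ -(lam / 2) * V s + b * q₁ := by
    intro s hs
    have hq : exp (-μ * (s - t₀)) ≤ q₁ := exp_le_exp.2 (by nlinarith [hs.1])
    have hVs := hV0 s (by linarith [hs.1])
    nlinarith [hV' s (by linarith [hs.1]), mul_le_mul_of_nonneg_right hq hVs,
      mul_le_mul_of_nonneg_right hq hb, mul_le_mul_of_nonneg_right haT₁.le hVs]
  calc V t ≤ gronwallBound (V (t₀ + T₁)) (-(lam / 2)) (b * q₁) (t - (t₀ + T₁)) :=
        le_gronwallBound_of_hasDerivAt (by linarith) (fun s hs => hV s (by linarith [hs.1]))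
          le_rfl hdecay
    _ ≤ V (t₀ + T₁) * exp (-(lam / 2) * (t - (t₀ + T₁))) + b * q₁ / -(-(lam / 2)) :=
        gronwallBound_le_of_neg (by linarith) (by positivity) (by linarith)
    _ ≤ V₁ * exp (-(lam / 2) * T₂) + ε / 2 := by
        gcongr ?_ + ?_
        · calc V (t₀ + T₁) * exp (-(lam / 2) * (t - (t₀ + T₁)))
              ≤ V (t₀ + T₁) * exp (-(lam / 2) * T₂) := by
                refine mul_le_mul_of_nonneg_left (exp_le_exp.2 ?_) (hV0 _ (by linarith))
                nlinarith
            _ ≤ V₁ * exp (-(lam / 2) * T₂) :=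
                mul_le_mul_of_nonneg_right hgrowth (exp_pos _).le
        · rw [neg_neg, div_le_iff₀ (half_pos hlam)]
          nlinarith
    _ ≤ ε := by linarith

section DotProduct

variable {ι : Type*} [Fintype ι]

lemma sq_norm_le_dotProduct_self (v : ι → ℝ) : ‖v‖ ^ 2 ≤ v ⬝ᵥ v := by
  have hv : ‖v‖ ≤ Real.sqrt (v ⬝ᵥ v) := by
    refine (pi_norm_le_iff_of_nonneg (sqrt_nonneg _)).2 fun i => abs_le_sqrt ?_
    simpa [dotProduct, sq] using single_le_sum (fun j _ => mul_self_nonneg (v j)) (mem_univ i)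
  calc ‖v‖ ^ 2 ≤ Real.sqrt (v ⬝ᵥ v) ^ 2 := by gcongr
    _ = v ⬝ᵥ v := sq_sqrt (Fintype.sum_nonneg fun i => mul_self_nonneg (v i))

lemma dotProduct_self_le_card_mul_sq_norm (v : ι → ℝ) : v ⬝ᵥ v ≤ Fintype.card ι * ‖v‖ ^ 2 := by
  calc v ⬝ᵥ v = ∑ i, |v i| ^ 2 := by simp [dotProduct, sq]
    _ ≤ ∑ _i : ι, ‖v‖ ^ 2 := by gcongr with i; exact norm_le_pi_norm v i
    _ = Fintype.card ι * ‖v‖ ^ 2 := by simp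

lemma abs_dotProduct_mulVec_le (A : Matrix ι ι ℝ) (u v : ι → ℝ) :
    |u ⬝ᵥ A *ᵥ v| ≤ (∑ i, ∑ j, |A i j|) * ‖u‖ * ‖v‖ := by
  calc |u ⬝ᵥ A *ᵥ v| = |∑ i, ∑ j, u i * A i j * v j| := by
        simp [dotProduct, mulVec, mul_sum, mul_assoc]
    _ ≤ ∑ i, ∑ j, |u i| * |A i j| * |v j| := by
        refine (abs_sum_le_sum_abs _ _).trans (sum_le_sum fun i _ => ?_)
        simpa only [abs_mul] using abs_sum_le_sum_abs (fun j => u i * A i j * v j) univ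
    _ ≤ ∑ i, ∑ j, ‖u‖ * |A i j| * ‖v‖ := by
        gcongr with i _ j _
        exacts [norm_le_pi_norm u i, norm_le_pi_norm v j]
    _ = (∑ i, ∑ j, |A i j|) * ‖u‖ * ‖v‖ := by
        simp only [sum_mul]; congr 1; ext; congr 1; ext; ring

lemma abs_mean_le_norm (v : ι → ℝ) : |(∑ i, v i) / Fintype.card ι| ≤ ‖v‖ := by
  rw [abs_div, Nat.abs_cast]
  refine div_le_of_le_mul₀ (Nat.cast_nonneg _) (norm_nonneg v) ?_
  calc |∑ i, v i| ≤ ∑ i, |v i| := abs_sum_le_sum_abs _ _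
    _ ≤ ∑ _i : ι, ‖v‖ := sum_le_sum fun i _ => norm_le_pi_norm v i
    _ = ‖v‖ * Fintype.card ι := by simp [mul_comm]

lemma sum_sub_mean_eq_zero (v : ι → ℝ) : ∑ i, (v i - (∑ j, v j) / Fintype.card ι) = 0 := by
  rcases isEmpty_or_nonempty ι with hι | hι
  · simp
  · rw [sum_sub_distrib, sum_const, card_univ, nsmul_eq_mul,
      mul_div_cancel₀ _ (Nat.cast_ne_zero.2 Fintype.card_ne_zero), sub_self]

lemma dotProduct_self_sub_mean_le {R : ℝ} (v : ι → ℝ) (hv : ‖v‖ ≤ R) :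
    (v - fun _ => (∑ i, v i) / Fintype.card ι) ⬝ᵥ (v - fun _ => (∑ i, v i) / Fintype.card ι) ≤
      Fintype.card ι * (2 * R) ^ 2 := by
  have hmean : ‖fun _ : ι => (∑ i, v i) / Fintype.card ι‖ ≤ R :=
    (pi_norm_const_le _).trans ((Real.norm_eq_abs _).trans_le ((abs_mean_le_norm v).trans hv))
  have : ‖v - fun _ => (∑ i, v i) / Fintype.card ι‖ ≤ 2 * R := by
    linarith [norm_sub_le v fun _ => (∑ i, v i) / Fintype.card ι]
  exact (dotProduct_self_le_card_mul_sq_norm _).trans (by gcongr)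

lemma dotProduct_add_transpose_mulVec_self (A : Matrix ι ι ℝ) (v : ι → ℝ) :
    v ⬝ᵥ (A + Aᵀ) *ᵥ v = 2 * (v ⬝ᵥ A *ᵥ v) := by
  rw [add_mulVec, dotProduct_add, mulVec_transpose, dotProduct_comm v (v ᵥ* A),
    ← dotProduct_mulVec]
  ring

lemma HasDerivAt.dotProduct_self {y : ℝ → ι → ℝ} {y' : ι → ℝ} {t : ℝ}
    (hy : HasDerivAt y y' t) : HasDerivAt (fun s => y s ⬝ᵥ y s) (2 * (y t ⬝ᵥ y')) t := by
  have hyi := hasDerivAt_pi.1 hy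
  have h : HasDerivAt (fun s => ∑ i, y s i * y s i) (∑ i, (y' i * y t i + y t i * y' i)) t :=
    HasDerivAt.fun_sum fun i _ => (hyi i).fun_mul (hyi i)
  refine h.congr_deriv ?_
  simp only [dotProduct, mul_sum]
  exact sum_congr rfl fun i _ => by ring

lemma sum_eq_of_hasDerivAt_of_sum_eq_zero {x x' : ℝ → ι → ℝ} {t₀ : ℝ}
    (hx : ∀ t ≥ t₀, HasDerivAt x (x' t) t) (hx' : ∀ t ≥ t₀, ∑ i, x' t i = 0) {s : ℝ}
    (hs : t₀ ≤ s) : ∑ i, x s i = ∑ i, x t₀ i := by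
  have hsum : ∀ t ≥ t₀, HasDerivAt (fun t => ∑ i, x t i) 0 t := fun t ht =>
    hx' t ht ▸ HasDerivAt.fun_sum fun i _ => hasDerivAt_pi.1 (hx t ht) i
  exact constant_of_has_deriv_right_zero
    (fun t ht => (hsum t ht.1).continuousAt.continuousWithinAt)
    (fun t ht => (hsum t ht.1).hasDerivWithinAt) s (right_mem_Icc.2 hs)

lemma exists_pos_mul_dotProduct_self_le (M : Matrix ι ι ℝ) (K : Submodule ℝ (ι → ℝ))
    (hM : ∀ w ∈ K, w ≠ 0 → 0 < w ⬝ᵥ M *ᵥ w) :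
    ∃ c > 0, ∀ w ∈ K, c * (w ⬝ᵥ w) ≤ w ⬝ᵥ M *ᵥ w := by
  set S := Metric.sphere (0 : ι → ℝ) 1 ∩ K
  have hnormalize : ∀ w ∈ K, w ≠ 0 → ‖w‖⁻¹ • w ∈ S := fun w hw hw0 =>
    ⟨by simpa using norm_smul_inv_norm (𝕜 := ℝ) hw0, K.smul_mem _ hw⟩
  by_cases hS : S.Nonempty
  · set rayleigh : (ι → ℝ) → ℝ := fun w => (w ⬝ᵥ M *ᵥ w) / (w ⬝ᵥ w)
    have hself : ∀ w : ι → ℝ, w ≠ 0 → 0 < w ⬝ᵥ w := fun w hw => by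
      simpa using dotProduct_self_star_pos_iff.2 hw
    have hcont : ContinuousOn rayleigh S := by
      refine ContinuousOn.div (by fun_prop) (by fun_prop) fun w hw => (hself w ?_).ne'
      rintro rfl
      simpa using hw.1
    obtain ⟨w₀, hw₀, hmin⟩ := ((isCompact_sphere 0 1).inter_right
      K.closed_of_finiteDimensional).exists_isMinOn hS hcont
    have hw₀0 : w₀ ≠ 0 := by rintro rfl; simpa using hw₀.1
    refine ⟨rayleigh w₀, div_pos (hM w₀ hw₀.2 hw₀0) (hself w₀ hw₀0), fun w hw => ?_⟩
    rcases eq_or_ne w 0 with rfl | hw0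
    · simp
    have hscale : rayleigh (‖w‖⁻¹ • w) = rayleigh w := by
      have : ‖w‖⁻¹ ≠ 0 := by positivity
      simp only [rayleigh, mulVec_smul, dotProduct_smul, smul_dotProduct, smul_eq_mul]
      field_simp
    rw [← le_div_iff₀ (hself w hw0)]
    exact (hmin (hnormalize w hw hw0)).trans_eq hscale
  · refine ⟨1, one_pos, fun w hw => ?_⟩
    obtain rfl : w = 0 := by
      by_contra hw0
      exact hS ⟨_, hnormalize w hw hw0⟩
    simp

end DotProduct

section MaskedConsensus

variable {n : ℕ} (L : Matrix (Fin n) (Fin n) ℝ) (φ σ δ γ : Fin n → ℝ)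

/-- `(I + Φ e^{-Σt})(y + e^{-Δt}γ) - y`, which decays like `e^{-min(σ, δ) t}`. -/
noncomputable def maskPerturbation (t : ℝ) (y : Fin n → ℝ) : Fin n → ℝ :=
  fun i => φ i * exp (-σ i * t) * (y i + exp (-δ i * t) * γ i) + exp (-δ i * t) * γ i

lemma sum_maskedConsensusRHS_eq_zero (hLT1 : Lᵀ *ᵥ (fun _ => (1 : ℝ)) = 0) (t : ℝ)
    (y : Fin n → ℝ) : ∑ i, maskedConsensusRHS L φ σ δ γ t y i = 0 := by
  simp only [maskedConsensusRHS, Pi.neg_apply, sum_neg_distrib, neg_eq_zero]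
  rw [← one_dotProduct, dotProduct_mulVec, ← mulVec_transpose]
  exact (congrArg (· ⬝ᵥ _) hLT1).trans (zero_dotProduct _)

lemma sum_sub_mean_eq_zero_of_hasDerivAt (hLT1 : Lᵀ *ᵥ (fun _ => (1 : ℝ)) = 0)
    {x : ℝ → Fin n → ℝ} {t₀ : ℝ}
    (hx : ∀ t ∈ Ici t₀, HasDerivAt x (maskedConsensusRHS L φ σ δ γ t (x t)) t) {s : ℝ}
    (hs : t₀ ≤ s) : ∑ i, (x s i - (∑ j, x t₀ j) / n) = 0 := by
  simpa [sum_eq_of_hasDerivAt_of_sum_eq_zero hx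
    (fun t _ => sum_maskedConsensusRHS_eq_zero L φ σ δ γ hLT1 t (x t)) hs]
    using sum_sub_mean_eq_zero (x s)

lemma maskedConsensusRHS_eq (hL1 : L *ᵥ (fun _ => (1 : ℝ)) = 0) (t η : ℝ) (y : Fin n → ℝ) :
    maskedConsensusRHS L φ σ δ γ t y =
      -(L *ᵥ (y - fun _ => η)) - L *ᵥ maskPerturbation φ σ δ γ t y := by
  have hconst : L *ᵥ (fun _ => η) = 0 := by
    rw [show (fun _ => η) = η • fun _ : Fin n => (1 : ℝ) by ext; simp, mulVec_smul, hL1, smul_zero]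
  have hsplit : (fun i => (1 + φ i * exp (-σ i * t)) * (y i + exp (-δ i * t) * γ i)) =
      (y - fun _ => η) + (fun _ => η) + maskPerturbation φ σ δ γ t y := by
    ext i
    simp only [maskPerturbation, Pi.add_apply, Pi.sub_apply]
    ring
  rw [maskedConsensusRHS, hsplit, mulVec_add, mulVec_add, hconst, add_zero, neg_add]
  rfl

lemma norm_maskPerturbation_le {μ t₀ s : ℝ} (hμ : 0 ≤ μ) (hμσ : ∀ i, μ ≤ σ i)
    (hμδ : ∀ i, μ ≤ δ i) (ht₀ : 0 ≤ t₀) (hs : t₀ ≤ s) (y : Fin n → ℝ) :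
    ‖maskPerturbation φ σ δ γ s y‖ ≤ exp (-μ * (s - t₀)) * (‖φ‖ * (‖y‖ + ‖γ‖) + ‖γ‖) := by
  set q := exp (-μ * (s - t₀))
  have hdecay : ∀ ρ ≥ μ, exp (-ρ * s) ≤ q := fun ρ hρ => exp_le_exp.2 (by nlinarith)
  have hq : q ≤ 1 := exp_le_one_iff.2 (by nlinarith)
  refine (pi_norm_le_iff_of_nonneg (by positivity)).2 fun i => ?_
  have hφi := norm_le_pi_norm φ i
  have hyi := norm_le_pi_norm y i
  have hγi := norm_le_pi_norm γ i
  simp only [maskPerturbation, Real.norm_eq_abs] at *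
  calc |φ i * exp (-σ i * s) * (y i + exp (-δ i * s) * γ i) + exp (-δ i * s) * γ i|
      ≤ |φ i| * exp (-σ i * s) * (|y i| + exp (-δ i * s) * |γ i|) + exp (-δ i * s) * |γ i| := by
        refine (abs_add_le _ _).trans ?_
        simp only [abs_mul, abs_exp]
        gcongr
        exact (abs_add_le _ _).trans_eq (by rw [abs_mul, abs_exp])
    _ ≤ ‖φ‖ * q * (‖y‖ + 1 * ‖γ‖) + q * ‖γ‖ := by
        gcongr
        exacts [hdecay _ (hμσ i), (hdecay _ (hμδ i)).trans hq, hdecay _ (hμδ i)]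
    _ = q * (‖φ‖ * (‖y‖ + ‖γ‖) + ‖γ‖) := by ring

theorem exists_maskedConsensusRHS_dissipation_bound (hL1 : L *ᵥ (fun _ => (1 : ℝ)) = 0)
    {μ R : ℝ} (hμ : 0 ≤ μ) (hμσ : ∀ i, μ ≤ σ i) (hμδ : ∀ i, μ ≤ δ i) (hR : 0 ≤ R) :
    ∃ a b : ℝ, 0 ≤ a ∧ 0 ≤ b ∧ ∀ t₀ s η : ℝ, ∀ y : Fin n → ℝ, 0 ≤ t₀ → t₀ ≤ s → |η| ≤ R →
      2 * ((y - fun _ => η) ⬝ᵥ maskedConsensusRHS L φ σ δ γ s y) ≤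
        -((y - fun _ => η) ⬝ᵥ (L + Lᵀ) *ᵥ (y - fun _ => η)) + exp (-μ * (s - t₀)) *
          (a * ((y - fun _ => η) ⬝ᵥ (y - fun _ => η)) + b) := by
  set C := ∑ i, ∑ j, |L i j|
  set k := ‖φ‖ * (R + ‖γ‖) + ‖γ‖
  refine ⟨C * (2 * ‖φ‖ + k), C * k, by positivity, by positivity,
    fun t₀ s η y ht₀ hs hη => ?_⟩
  set e := y - fun _ => η
  set q := exp (-μ * (s - t₀))
  have hy : ‖y‖ ≤ ‖e‖ + R := calc
    ‖y‖ = ‖e + fun _ => η‖ := by rw [sub_add_cancel]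
    _ ≤ ‖e‖ + R := (norm_add_le _ _).trans (by gcongr; exact (pi_norm_const_le η).trans hη)
  have hm : ‖maskPerturbation φ σ δ γ s y‖ ≤ q * (‖φ‖ * (‖e‖ + R + ‖γ‖) + ‖γ‖) :=
    (norm_maskPerturbation_le φ σ δ γ hμ hμσ hμδ ht₀ hs y).trans (by gcongr)
  have hcross := abs_dotProduct_mulVec_le L e (maskPerturbation φ σ δ γ s y)
  have he : ‖e‖ ^ 2 ≤ e ⬝ᵥ e := sq_norm_le_dotProduct_self e
  rw [maskedConsensusRHS_eq L φ σ δ γ hL1 s η y, dotProduct_sub, dotProduct_neg,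
    dotProduct_add_transpose_mulVec_self]
  suffices -(2 * (e ⬝ᵥ L *ᵥ maskPerturbation φ σ δ γ s y)) ≤
      q * (C * (2 * ‖φ‖ + k) * (e ⬝ᵥ e) + C * k) by linarith
  calc -(2 * (e ⬝ᵥ L *ᵥ maskPerturbation φ σ δ γ s y))
      ≤ 2 * (C * ‖e‖ * (q * (‖φ‖ * (‖e‖ + R + ‖γ‖) + ‖γ‖))) := by
        nlinarith [neg_abs_le (e ⬝ᵥ L *ᵥ maskPerturbation φ σ δ γ s y),
          mul_le_mul_of_nonneg_left hm (by positivity : 0 ≤ C * ‖e‖)]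
    _ = q * (2 * C * ‖φ‖ * ‖e‖ ^ 2 + C * k * (2 * ‖e‖)) := by ring
    _ ≤ q * (2 * C * ‖φ‖ * ‖e‖ ^ 2 + C * k * (‖e‖ ^ 2 + 1)) := by
        gcongr
        nlinarith [sq_nonneg (‖e‖ - 1)]
    _ = q * (C * (2 * ‖φ‖ + k) * ‖e‖ ^ 2 + C * k) := by ring
    _ ≤ q * (C * (2 * ‖φ‖ + k) * (e ⬝ᵥ e) + C * k) := by gcongr

end MaskedConsensus

theorem masked_consensus_uniform_attractor_general
    (n : ℕ) (L : Matrix (Fin n) (Fin n) ℝ) (φ σ δ γ : Fin n → ℝ)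
    (hL1 : L.mulVec (fun _ => (1 : ℝ)) = 0)
    (hLT1 : L.transpose.mulVec (fun _ => (1 : ℝ)) = 0)
    (hLpos : ∀ w : Fin n → ℝ, w ≠ 0 → (∑ i, w i) = 0 →
      0 < dotProduct w ((L + L.transpose).mulVec w))
    (hσ : ∀ i, 0 < σ i) (hδ : ∀ i, 0 < δ i) :
    ∀ ν : ℝ, 0 < ν → ∀ B : Set (Fin n → ℝ), Bornology.IsBounded B →
      ∃ T : ℝ, 0 < T ∧
        ∀ t₀ : ℝ, 0 ≤ t₀ → ∀ x₀ ∈ B, ∀ x : ℝ → Fin n → ℝ, x t₀ = x₀ →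
          (∀ t ∈ Set.Ici t₀,
            HasDerivAt x (maskedConsensusRHS L φ σ δ γ t (x t)) t) →
          ∀ t : ℝ, t₀ + T < t →
            ‖x t - (fun _ => (∑ i, x₀ i) / n)‖ < ν := by
  intro ν hν B hB
  set K := LinearMap.ker (Fintype.linearCombination ℝ fun _ : Fin n => (1 : ℝ))
  have hK : ∀ w, w ∈ K ↔ ∑ i, w i = 0 := by simp [K, Fintype.linearCombination_apply]
  obtain ⟨lam, hlam, hgap⟩ := exists_pos_mul_dotProduct_self_le (L + Lᵀ) K
    fun w hw hw0 => hLpos w hw0 ((hK w).1 hw)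
  obtain ⟨μ, hμ, hμ_le⟩ := exists_pos_le_of_forall_pos fun i => lt_min (hσ i) (hδ i)
  obtain ⟨R, hR, hRB⟩ := hB.exists_pos_norm_le
  obtain ⟨a, b, ha, hb, hdiss⟩ := exists_maskedConsensusRHS_dissipation_bound L φ σ δ γ hL1 hμ.le
    (fun i => (hμ_le i).trans (min_le_left _ _)) (fun i => (hμ_le i).trans (min_le_right _ _))
    hR.le
  obtain ⟨T, hT, hdecay⟩ := exists_uniform_decay_time (V₀ := n * (2 * R) ^ 2) hlam hμ ha hb
    (show 0 < ν ^ 2 / 2 by positivity)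
  refine ⟨T, hT, fun t₀ ht₀ x₀ hx₀ x hxt₀ hx t ht => ?_⟩
  subst hxt₀
  set η := (∑ i, x t₀ i) / n
  set e := fun s => x s - fun _ => η
  have hη : |η| ≤ R := by simpa using (abs_mean_le_norm (x t₀)).trans (hRB _ hx₀)
  have hVt₀ : e t₀ ⬝ᵥ e t₀ ≤ n * (2 * R) ^ 2 := by
    simpa only [Fintype.card_fin] using dotProduct_self_sub_mean_le (x t₀) (hRB _ hx₀)
  have hV := hdecay (fun s => e s ⬝ᵥ e s)
    (fun s => 2 * (e s ⬝ᵥ maskedConsensusRHS L φ σ δ γ s (x s))) t₀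
    (fun s hs => ((hx s hs).sub_const _).dotProduct_self)
    (fun s _ => Fintype.sum_nonneg fun i => mul_self_nonneg _) hVt₀
    (fun s hs => by
      have := hgap (e s) ((hK _).2 (sum_sub_mean_eq_zero_of_hasDerivAt L φ σ δ γ hLT1 hx hs))
      linarith [hdiss t₀ s η (x s) ht₀ hs hη])
    t ht.le
  exact lt_of_pow_lt_pow_left₀ 2 hν.le
    ((sq_norm_le_dotProduct_self (e t)).trans_lt (by linarith [pow_pos hν 2]))

/-- **Uniform attractivity of the average-consensus point (Theorem 1).**
For every `ν > 0` and every bounded set `B ⊆ ℝⁿ` there is `T = T(ν, B) > 0` such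
that for every initial time `t₀ ≥ 0` and every solution `x` of the masked system
`ẋ = -L (I + Φ e^{-Σ t}) (x + e^{-Δ t} γ)` with `x(t₀) = x₀ ∈ B`, one has
`‖x(t) − (𝟙ᵀx₀/n) 𝟙‖ < ν` for all `t > t₀ + T`. Here `L` is an irreducible
weight-balanced Laplacian (`L𝟙 = Lᵀ𝟙 = 0`, `wᵀ(L+Lᵀ)w > 0` for nonzero `w ⊥ 𝟙`)
and `φᵢ, σᵢ, δᵢ > 0`. -/
theorem masked_consensus_uniform_attractor
    (n : ℕ) (hn : 2 ≤ n) (L : Matrix (Fin n) (Fin n) ℝ) (φ σ δ γ : Fin n → ℝ)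
    (hL1 : L.mulVec (fun _ => (1 : ℝ)) = 0)
    (hLT1 : L.transpose.mulVec (fun _ => (1 : ℝ)) = 0)
    (hLpos : ∀ w : Fin n → ℝ, w ≠ 0 → (∑ i, w i) = 0 →
      0 < dotProduct w ((L + L.transpose).mulVec w))
    (hφ : ∀ i, 0 < φ i) (hσ : ∀ i, 0 < σ i) (hδ : ∀ i, 0 < δ i) :
    ∀ ν : ℝ, 0 < ν → ∀ B : Set (Fin n → ℝ), Bornology.IsBounded B →
      ∃ T : ℝ, 0 < T ∧
        ∀ t₀ : ℝ, 0 ≤ t₀ → ∀ x₀ ∈ B, ∀ x : ℝ → Fin n → ℝ, x t₀ = x₀ →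
          (∀ t ∈ Set.Ici t₀,
            HasDerivAt x (maskedConsensusRHS L φ σ δ γ t (x t)) t) →
          ∀ t : ℝ, t₀ + T < t →
            ‖x t - (fun _ => (∑ i, x₀ i) / n)‖ < ν :=
  masked_consensus_uniform_attractor_general n L φ σ δ γ hL1 hLT1 hLpos hσ hδ
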